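/- arXiv:2309.05171 — 2 statements merged into one kernel-verified Lean document; each statement's English description precedes it below -/
import Mathlib

section
/- Let G be a connected graph on n vertices with maximum degree n − 1. Then Kemeny's constant of G is strictly less than 2(n − 1). -/
open Finset Classical

/-- The number of spanning trees of a finite simple graph `G`. -/
noncomputable def numSpanningTrees {V : Type*} [Fintype V] (G : SimpleGraph V) : ℕ :=
  Nat.card {T : SimpleGraph V // T ≤ G ∧ T.IsTree}

/-- The number of spanning 2-forests of `G` with `i` and `j` in different components. -/
noncomputable def numSepForests {V : Type*} [Fintype V] (G : SimpleGraph V) (i j : V) : ℕ :=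
  Nat.card {F : SimpleGraph V // F ≤ G ∧ F.IsAcyclic ∧
    Nat.card F.ConnectedComponent = 2 ∧ ¬ F.Reachable i j}

/-- The effective resistance between `i` and `j`: the number of spanning 2-forests separating
`i` and `j` divided by the number of spanning trees. -/
noncomputable def effRes {V : Type*} [Fintype V] (G : SimpleGraph V) (i j : V) : ℝ :=
  (numSepForests G i j : ℝ) / (numSpanningTrees G : ℝ)

/-- Kemeny's constant of a connected graph `G`:
`K(G) = (1/(4m)) ∑_{i,j} d_i r_{i,j} d_j`. -/
noncomputable def kemeny {V : Type*} [Fintype V] (G : SimpleGraph V) : ℝ :=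
  (1 / (4 * (G.edgeFinset.card : ℝ))) *
    ∑ i : V, ∑ j : V, (G.degree i : ℝ) * effRes G i j * (G.degree j : ℝ)

/-!
Let `v` be a vertex adjacent to all others. Effective resistance satisfies the triangle
inequality `r(i,j) ≤ r(v,i) + r(v,j)`, and averaging it against `dᵢ dⱼ / 4m` gives
`K(G) ≤ ∑ⱼ dⱼ r(v,j)`. It remains to see `dⱼ r(v,j) < 2` for `j ≠ v`, i.e. that `dⱼ` times the
number of spanning 2-forests separating `v` from `j` is less than twice the number of spanning
trees. Given such a forest `F` and a neighbour `u` of `j`, add the edge `ju` if `u` lies in the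
component of `v`, and the edge `vu` otherwise. The result is a spanning tree in which the added
edge is the last (resp. first) edge of the path from `v` to `j`, so the tree determines `F` and `u`;
and no tree through the edge `vj` (one exists, as `G` is connected) arises in the second way.
-/

namespace SimpleGraph

variable {V : Type*}

lemma sup_edge_deleteEdges {F : SimpleGraph V} {a b : V} (h : ¬F.Adj a b) :
    (F ⊔ edge a b).deleteEdges {s(a, b)} = F := by
  simp [deleteEdges_sup, h]

lemma mem_edges_of_sup_edge_eq {F T : SimpleGraph V} {a b x y : V} (hT : F ⊔ edge a b = T)
    (hab : ¬F.Adj a b) (hxy : ¬F.Reachable x y) (p : T.Walk x y) : s(a, b) ∈ p.edges := by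
  subst hT
  by_contra hp
  rw [← sup_edge_deleteEdges hab] at hxy
  exact hxy (reachable_deleteEdges_iff_exists_walk.mpr ⟨p, hp⟩)

lemma eq_and_eq_of_sup_edge_eq {F₁ F₂ : SimpleGraph V} {x y a₁ a₂ : V}
    (h₁ : ¬F₁.Reachable x a₁) (h₂ : ¬F₂.Reachable x a₂)
    (hy₁ : ¬F₁.Reachable x y) (hy₂ : ¬F₂.Reachable x y)
    (hy : (F₁ ⊔ edge x a₁).Reachable x y) (h : F₁ ⊔ edge x a₁ = F₂ ⊔ edge x a₂) :
    a₁ = a₂ ∧ F₁ = F₂ := by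
  obtain ⟨p, hp⟩ := hy.exists_isPath
  have ha : a₁ = a₂ :=
    (hp.eq_snd_of_mem_edges (mem_edges_of_sup_edge_eq rfl (h₁ ·.reachable) hy₁ p)).trans
      (hp.eq_snd_of_mem_edges (mem_edges_of_sup_edge_eq h.symm (h₂ ·.reachable) hy₂ p)).symm
  subst ha
  refine ⟨rfl, ?_⟩
  rw [← sup_edge_deleteEdges (h₁ ·.reachable), h, sup_edge_deleteEdges (h₂ ·.reachable)]

lemma reachable_or_reachable_of_card_connectedComponent_eq_two {F : SimpleGraph V} {a b : V}
    (h2 : Nat.card F.ConnectedComponent = 2) (hab : ¬F.Reachable a b) (x : V) :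
    F.Reachable x a ∨ F.Reachable x b := by
  obtain ⟨c, d, -, hcd⟩ := Nat.card_eq_two_iff.mp h2
  have hmem (e : F.ConnectedComponent) : e = c ∨ e = d := by simpa using hcd.ge (Set.mem_univ e)
  simp only [← ConnectedComponent.eq] at hab ⊢
  grind [hmem (F.connectedComponentMk a), hmem (F.connectedComponentMk b),
    hmem (F.connectedComponentMk x)]

lemma IsAcyclic.isTree_sup_edge {F : SimpleGraph V} {a b : V} (hF : F.IsAcyclic)
    (h2 : Nat.card F.ConnectedComponent = 2) (hab : ¬F.Reachable a b) :
    (F ⊔ edge a b).IsTree := by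
  have hne : a ≠ b := fun h => hab (h ▸ Reachable.refl a)
  have hadj : (F ⊔ edge a b).Adj a b := Or.inr ((edge_adj ..).mpr ⟨Or.inl ⟨rfl, rfl⟩, hne⟩)
  refine ⟨(connected_iff_exists_forall_reachable _).mpr ⟨a, fun x => ?_⟩,
    hF.sup_edge_of_not_reachable hab⟩
  rcases reachable_or_reachable_of_card_connectedComponent_eq_two h2 hab x with hx | hx
  · exact (hx.mono le_sup_left).symm
  · exact hadj.reachable.trans (hx.mono le_sup_left).symm

end SimpleGraph

open SimpleGraph

section Counting

variable {V : Type*} (G : SimpleGraph V)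

def sepForests (i j : V) : Set (SimpleGraph V) :=
  {F | F ≤ G ∧ F.IsAcyclic ∧ Nat.card F.ConnectedComponent = 2 ∧ ¬ F.Reachable i j}

def spanningTrees : Set (SimpleGraph V) := {T | T ≤ G ∧ T.IsTree}

lemma sup_edge_mem_spanningTrees {F : SimpleGraph V} {a b : V} (hFG : F ≤ G) (hF : F.IsAcyclic)
    (h2 : Nat.card F.ConnectedComponent = 2) (hab : ¬F.Reachable a b) (hGab : G.Adj a b) :
    F ⊔ edge a b ∈ spanningTrees G :=
  ⟨sup_le hFG ((edge_le_iff G).mpr (Or.inr hGab)), hF.isTree_sup_edge h2 hab⟩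

variable [Fintype V]

lemma numSepForests_eq_card (i j : V) : numSepForests G i j = Nat.card (sepForests G i j) := rfl

lemma numSpanningTrees_eq_card : numSpanningTrees G = Nat.card (spanningTrees G) := rfl

lemma numSepForests_self (i : V) : numSepForests G i i = 0 := by
  rw [numSepForests_eq_card, Nat.card_eq_zero]
  exact Or.inl ⟨fun F => F.2.2.2.2 (Reachable.refl i)⟩

lemma numSepForests_comm (i j : V) : numSepForests G i j = numSepForests G j i := by
  simp only [numSepForests, reachable_comm]

lemma numSepForests_le_add (i j v : V) :
    numSepForests G i j ≤ numSepForests G i v + numSepForests G v j := by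
  simp only [numSepForests_eq_card, Nat.card_coe_set_eq]
  refine (Set.ncard_le_ncard (fun F hF => ?_) (Set.toFinite _)).trans (Set.ncard_union_le _ _)
  obtain ⟨hFG, hF, h2, hij⟩ := hF
  by_cases hiv : F.Reachable i v
  · exact Or.inr ⟨hFG, hF, h2, fun hvj => hij (hiv.trans hvj)⟩
  · exact Or.inl ⟨hFG, hF, h2, hiv⟩

end Counting

section Attach

variable {V : Type*} {G : SimpleGraph V} {v j : V}

noncomputable def attachNeighbor (hN : ∀ u, G.Adj j u → v ≠ u → G.Adj v u) :
    sepForests G v j × G.neighborSet j → spanningTrees G ⊕ spanningTrees G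
  | (⟨F, hFG, hF, h2, hvj⟩, u) =>
    if hvu : F.Reachable v u then
      .inl ⟨F ⊔ edge j u, sup_edge_mem_spanningTrees G hFG hF h2
        (fun hju => hvj (hvu.trans hju.symm)) u.2⟩
    else
      .inr ⟨F ⊔ edge v u, sup_edge_mem_spanningTrees G hFG hF h2 hvu
        (hN u u.2 (fun h => hvu (h ▸ .rfl)))⟩

lemma attachNeighbor_injective (hN : ∀ u, G.Adj j u → v ≠ u → G.Adj v u) :
    Function.Injective (attachNeighbor hN) := by
  rintro ⟨⟨F₁, hF₁G, hF₁, h₁2, hvj₁⟩, u₁⟩ ⟨⟨F₂, hF₂G, hF₂, h₂2, hvj₂⟩, u₂⟩ h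
  simp only [attachNeighbor] at h
  split_ifs at h with hvu₁ hvu₂ hvu₂
  · have hju₁ : ¬F₁.Reachable j u₁ := fun hju => hvj₁ (hvu₁.trans hju.symm)
    obtain ⟨hu, rfl⟩ := eq_and_eq_of_sup_edge_eq hju₁
      (fun hju => hvj₂ (hvu₂.trans hju.symm)) (hvj₁ ·.symm) (hvj₂ ·.symm)
      ((hF₁.isTree_sup_edge h₁2 hju₁).connected.preconnected j v)
      (Subtype.ext_iff.mp (Sum.inl_injective h))
    exact Prod.ext rfl (Subtype.ext hu)
  · obtain ⟨hu, rfl⟩ := eq_and_eq_of_sup_edge_eq hvu₁ hvu₂ hvj₁ hvj₂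
      ((hF₁.isTree_sup_edge h₁2 hvu₁).connected.preconnected v j)
      (Subtype.ext_iff.mp (Sum.inr_injective h))
    exact Prod.ext rfl (Subtype.ext hu)

lemma attachNeighbor_ne_inr (hN : ∀ u, G.Adj j u → v ≠ u → G.Adj v u)
    {T : SimpleGraph V} (hT : T ∈ spanningTrees G) (hvj : T.Adj v j)
    (p : sepForests G v j × G.neighborSet j) : attachNeighbor hN p ≠ .inr ⟨T, hT⟩ := by
  rintro h
  obtain ⟨⟨F, hFG, hF, h2, hvjF⟩, u⟩ := p
  simp only [attachNeighbor] at h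
  split_ifs at h with hvu
  have huv : s(v, u) = s(v, j) := by
    simpa using mem_edges_of_sup_edge_eq (Subtype.ext_iff.mp (Sum.inr_injective h))
      (hvu ·.reachable) hvjF (Walk.cons hvj .nil)
  exact u.2.ne (Sym2.congr_right.mp huv).symm

end Attach

section Resistance

variable {V : Type*} [Fintype V] {G : SimpleGraph V} {v j : V}

lemma numSepForests_mul_degree_lt (hG : G.Connected) (hvj : G.Adj v j)
    (hN : ∀ u, G.Adj j u → v ≠ u → G.Adj v u) :
    numSepForests G v j * G.degree j < 2 * numSpanningTrees G := by
  have hedge : (edge v j).IsAcyclic := by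
    simpa using isAcyclic_bot.sup_edge_of_not_reachable (reachable_bot.not.mpr hvj.ne)
  obtain ⟨T, hvjT, hTG, hT⟩ :=
    hG.exists_isTree_le_of_le_of_isAcyclic ((edge_le_iff G).mpr (.inr hvj)) hedge
  have hTvj : T.Adj v j := hvjT ((edge_adj ..).mpr ⟨.inl ⟨rfl, rfl⟩, hvj.ne⟩)
  have hinj := (attachNeighbor_injective hN).sumElim
    (Function.injective_of_subsingleton fun _ : Unit => Sum.inr ⟨T, hTG, hT⟩)
    fun p _ => attachNeighbor_ne_inr hN ⟨hTG, hT⟩ hTvj p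
  have := Nat.card_le_card_of_injective _ hinj
  rw [Nat.card_sum, Nat.card_prod, Nat.card_sum, Nat.card_unique (α := Unit),
    Nat.card_eq_fintype_card (α := G.neighborSet j), card_neighborSet_eq_degree] at this
  rw [numSepForests_eq_card, numSpanningTrees_eq_card]
  omega

lemma degree_mul_effRes_lt_two (hG : G.Connected) (hvj : G.Adj v j)
    (hN : ∀ u, G.Adj j u → v ≠ u → G.Adj v u) : G.degree j * effRes G v j < 2 := by
  have hlt := numSepForests_mul_degree_lt hG hvj hN
  have hτ : (0 : ℝ) < numSpanningTrees G := by exact_mod_cast (by omega : 0 < numSpanningTrees G)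
  rw [effRes, mul_div_assoc', div_lt_iff₀ hτ]
  exact_mod_cast (mul_comm (G.degree j) _).trans_lt hlt

variable (G)

lemma effRes_nonneg (i j : V) : 0 ≤ effRes G i j := by
  unfold effRes; positivity

lemma effRes_self (i : V) : effRes G i i = 0 := by
  simp [effRes, numSepForests_self]

lemma effRes_comm (i j : V) : effRes G i j = effRes G j i := by
  rw [effRes, effRes, numSepForests_comm]

lemma effRes_le_add (i j v : V) : effRes G i j ≤ effRes G i v + effRes G v j := by
  simp only [effRes, ← add_div]
  gcongr
  exact_mod_cast numSepForests_le_add G i j v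

theorem kemeny_le_sum_degree_mul_effRes (v : V) :
    kemeny G ≤ ∑ j, G.degree j * effRes G v j := by
  have hdeg : ∑ i, (G.degree i : ℝ) = 2 * G.edgeFinset.card := by
    exact_mod_cast G.sum_degrees_eq_twice_card_edges
  set S := ∑ j, (G.degree j : ℝ) * effRes G v j
  set m : ℝ := (G.edgeFinset.card : ℝ)
  have hsum : ∑ i, ∑ j, (G.degree i : ℝ) * effRes G i j * G.degree j ≤ 4 * m * S :=
    calc ∑ i, ∑ j, (G.degree i : ℝ) * effRes G i j * G.degree j
        ≤ ∑ i, ∑ j, ((G.degree i * effRes G v i) * G.degree j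
            + G.degree i * (G.degree j * effRes G v j)) := by
          gcongr with i _ j _
          have htri := effRes_le_add G i j v
          rw [effRes_comm G i v] at htri
          have hd : (0 : ℝ) ≤ G.degree i * G.degree j := by positivity
          linarith [mul_le_mul_of_nonneg_left htri hd]
      _ = 4 * m * S := by
          simp only [Finset.sum_add_distrib, ← Finset.sum_mul_sum, hdeg]
          ring
  have hS : 0 ≤ S :=
    Finset.sum_nonneg fun j _ => mul_nonneg (Nat.cast_nonneg _) (effRes_nonneg G v j)
  calc kemeny G ≤ 1 / (4 * m) * (4 * m * S) := by unfold kemeny; gcongr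
    _ = (4 * m) / (4 * m) * S := by ring
    _ ≤ S := mul_le_of_le_one_left hS (div_self_le_one _)

end Resistance

/-- If a connected graph `G` on `n` vertices has maximum degree `n - 1`, then
`K(G) < 2(n - 1)`. -/
theorem kemeny_lt_of_maxDegree_eq {V : Type*} [Fintype V] [Nonempty V] (G : SimpleGraph V)
    (hG : G.Connected) (hn : 2 ≤ Fintype.card V)
    (hΔ : G.maxDegree = Fintype.card V - 1) :
    kemeny G < 2 * ((Fintype.card V : ℝ) - 1) := by
  obtain ⟨v, hvmax⟩ := G.exists_maximal_degree_vertex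
  have hv : G.IsUniversal v := (G.degree_eq_card_sub_one v).mp (hvmax ▸ hΔ)
  have hne : (univ.erase v).Nonempty := by
    rw [← Finset.card_pos, card_erase_of_mem (mem_univ v), card_univ]; omega
  calc kemeny G ≤ ∑ j, G.degree j * effRes G v j := kemeny_le_sum_degree_mul_effRes G v
    _ = ∑ j ∈ univ.erase v, G.degree j * effRes G v j := by
      rw [sum_erase _ (by rw [effRes_self, mul_zero])]
    _ < ∑ j ∈ univ.erase v, (2 : ℝ) := sum_lt_sum_of_nonempty hne fun j hj =>
      degree_mul_effRes_lt_two hG (hv (ne_of_mem_erase hj).symm) fun _ _ hu => hv hu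
    _ = 2 * ((Fintype.card V : ℝ) - 1) := by
      rw [sum_const, card_erase_of_mem (mem_univ v), card_univ, nsmul_eq_mul,
        Nat.cast_sub (by omega), Nat.cast_one, mul_comm]
end

section
/- Let T be a tree on n ≥ 2 vertices. Then Kemeny's constant of T equals 2W(T)/(n−1) − n + 1/2, where W(T) is the Wiener index of T. -/
open Finset Classical

/-- The Wiener index of `G`: the sum of distances over all unordered pairs of distinct
vertices (computed as half the sum over ordered pairs). -/
noncomputable def wiener {V : Type*} [Fintype V] (G : SimpleGraph V) : ℝ :=
  (1 / 2) * ∑ i : V, ∑ j : V, (G.dist i j : ℝ)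

/-!
In a tree `T` the only spanning tree is `T` itself, and the spanning 2-forests separating `i` and
`j` are exactly the graphs `T - e` for `e` an edge of the `i`–`j` path, so `r(i,j) = dist(i,j)`.
Rooting `T` at `i`, every vertex `j ≠ i` has exactly one neighbour closer to `i`; splitting each
degree into this parent and the children gives `∑ⱼ dⱼ dist(i,j) = 2 ∑ⱼ dist(i,j) - m`. Applying
this in both indices, `∑ᵢⱼ dᵢ dist(i,j) dⱼ = 8W - 2nm - 2m²`, and `m = n - 1` does the rest.
-/

namespace SimpleGraph

section General

variable {V : Type*} {G F : SimpleGraph V}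

theorem Walk.reachable_deleteEdges_or {u v x y : V} (p : G.Walk x y) :
    (G.deleteEdges {s(u, v)}).Reachable x y ∨ (G.deleteEdges {s(u, v)}).Reachable x u ∨
      (G.deleteEdges {s(u, v)}).Reachable x v := by
  induction p with
  | nil => exact .inl .rfl
  | @cons x a y hxa _ ih =>
    by_cases he : s(x, a) = s(u, v)
    · rcases Sym2.eq_iff.mp he with ⟨rfl, -⟩ | ⟨rfl, -⟩
      exacts [.inr (.inl .rfl), .inr (.inr .rfl)]
    · have hxa' : (G.deleteEdges {s(u, v)}).Adj x a := deleteEdges_adj.mpr ⟨hxa, he⟩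
      exact ih.imp (hxa'.reachable.trans ·)
        (Or.imp (hxa'.reachable.trans ·) (hxa'.reachable.trans ·))

theorem Connected.card_connectedComponent_eq_one (hG : G.Connected) :
    Nat.card G.ConnectedComponent = 1 :=
  have := hG.preconnected.subsingleton_connectedComponent
  have := hG.nonempty.map G.connectedComponentMk
  Nat.card_unique

theorem Connected.card_connectedComponent_deleteEdges_eq_two (hG : G.Connected) {e : Sym2 V}
    (hb : G.IsBridge e) : Nat.card (G.deleteEdges {e}).ConnectedComponent = 2 := by
  induction e with
  | h u v =>
    refine Nat.card_eq_two_iff.mpr ⟨.mk _ u, .mk _ v, fun h => hb (ConnectedComponent.exact h), ?_⟩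
    refine Set.eq_univ_of_forall fun c => c.ind fun x => ?_
    obtain ⟨p⟩ := hG.preconnected x u
    rcases p.reachable_deleteEdges_or (u := u) (v := v) with h | h | h
    exacts [.inl (ConnectedComponent.sound h), .inl (ConnectedComponent.sound h),
      .inr (ConnectedComponent.sound h)]

/-- An edge of `G` missing from `F` is a bridge of `G`, so removing it would split a component of
`F`; hence `F ≤ G` with no more components than `G` is all of `G`. -/
theorem IsAcyclic.eq_of_le_of_card_connectedComponent_le [Finite V] (hG : G.IsAcyclic)
    (hle : F ≤ G) (hcard : Nat.card F.ConnectedComponent ≤ Nat.card G.ConnectedComponent) :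
    F = G := by
  have hinj : Function.Injective (ConnectedComponent.map (Hom.ofLE hle)) :=
    ((ConnectedComponent.surjective_map_ofLE hle).bijective_of_nat_card_le hcard).injective
  refine le_antisymm hle fun a b hab => ?_
  by_contra hF
  have hFab : F.Reachable a b :=
    ConnectedComponent.exact <| hinj <| ConnectedComponent.sound hab.reachable
  refine isBridge_iff.mp (isAcyclic_iff_forall_adj_isBridge.mp hG hab)
    (hFab.mono fun x y hxy => deleteEdges_adj.mpr ⟨hle hxy, fun h => hF ?_⟩)
  rcases Sym2.eq_iff.mp (Set.mem_singleton_iff.mp h) with ⟨rfl, rfl⟩ | ⟨rfl, rfl⟩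
  exacts [hxy, hxy.symm]

theorem IsAcyclic.reachable_deleteEdges_iff (hG : G.IsAcyclic) {i j : V} {p : G.Walk i j}
    (hp : p.IsPath) (e : Sym2 V) : (G.deleteEdges {e}).Reachable i j ↔ e ∉ p.edges := by
  induction e with
  | h a b =>
    rw [reachable_deleteEdges_iff_exists_walk]
    refine ⟨fun ⟨q, hq⟩ he => hq ?_, fun he => ⟨p, he⟩⟩
    have : q.bypass = p := congrArg Subtype.val <|
      (hG.subsingleton_path i j).elim ⟨q.bypass, q.bypass_isPath⟩ ⟨p, hp⟩
    exact q.edges_bypass_subset_edges (this ▸ he)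

theorem IsTree.existsUnique_adj_dist_add_one_eq (hG : G.IsTree) {i j : V} (hj : j ≠ i) :
    ∃! u, G.Adj j u ∧ G.dist i u + 1 = G.dist i j := by
  obtain ⟨p, hp, hlen⟩ := hG.connected.exists_path_of_dist i j
  have hnil : ¬ p.Nil := fun h => hj h.eq.symm
  refine ⟨p.penultimate, ⟨(p.adj_penultimate hnil).symm, ?_⟩, fun u ⟨hju, hu⟩ => ?_⟩
  · have := G.dist_le p.dropLast
    have := hG.dist_eq_dist_add_one_of_adj i (p.adj_penultimate hnil)
    rw [Walk.length_dropLast] at *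
    omega
  · obtain ⟨q, hq, hqlen⟩ := hG.connected.exists_path_of_dist i u
    have hjq : j ∉ q.support := fun hjq => by
      have := G.dist_le (q.takeUntil j hjq)
      have := q.length_takeUntil_le_length hjq
      omega
    exact hG.isAcyclic.eq_penultimate_of_adj_end hp hju
      (hG.isAcyclic.mem_support_of_ne_mem_support_of_adj_of_isPath hp hq hju hjq)

end General

section Fintype

variable {V : Type*} [Fintype V] {T : SimpleGraph V}

theorem IsTree.numSpanningTrees_eq_one (hT : T.IsTree) : numSpanningTrees T = 1 := by
  refine Nat.card_eq_one_iff_exists.mpr ⟨⟨T, le_rfl, hT⟩, fun ⟨S, hle, hS⟩ => Subtype.ext ?_⟩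
  refine hT.isAcyclic.eq_of_le_of_card_connectedComponent_le hle ?_
  rw [hS.connected.card_connectedComponent_eq_one, hT.connected.card_connectedComponent_eq_one]

theorem IsTree.numSepForests_eq_dist (hT : T.IsTree) (i j : V) :
    numSepForests T i j = T.dist i j := by
  obtain ⟨p, hp, hlen⟩ := hT.connected.exists_path_of_dist i j
  have hbridge {e : Sym2 V} (he : e ∈ p.edges) : T.IsBridge e :=
    isAcyclic_iff_forall_isBridge.mp hT.isAcyclic (p.edges_subset_edgeSet he)
  have hcut (e : {e // e ∈ p.edges.toFinset}) : T.deleteEdges {e.1} ≤ T ∧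
      (T.deleteEdges {e.1}).IsAcyclic ∧
      Nat.card (T.deleteEdges {e.1}).ConnectedComponent = 2 ∧
      ¬ (T.deleteEdges {e.1}).Reachable i j := by
    have he := List.mem_toFinset.mp e.2
    exact ⟨deleteEdges_le _, hT.isAcyclic.anti (deleteEdges_le _),
      hT.connected.card_connectedComponent_deleteEdges_eq_two (hbridge he),
      fun h => (hT.isAcyclic.reachable_deleteEdges_iff hp _).mp h he⟩
  let cut : {e // e ∈ p.edges.toFinset} → {F : SimpleGraph V // F ≤ T ∧ F.IsAcyclic ∧
      Nat.card F.ConnectedComponent = 2 ∧ ¬ F.Reachable i j} :=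
    fun e => ⟨T.deleteEdges {e.1}, hcut e⟩
  have hinj : Function.Injective cut := by
    rintro ⟨e₁, he₁⟩ ⟨e₂, he₂⟩ h
    replace h : T.deleteEdges {e₁} = T.deleteEdges {e₂} := congrArg Subtype.val h
    by_contra hne
    have : e₂ ∈ (T.deleteEdges {e₁}).edgeSet := by
      simp only [edgeSet_deleteEdges, Set.mem_sdiff, Set.mem_singleton_iff]
      exact ⟨p.edges_subset_edgeSet (List.mem_toFinset.mp he₂), fun h => hne (Subtype.ext h.symm)⟩
    rw [h] at this
    simp at this
  have hsurj : Function.Surjective cut := by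
    rintro ⟨F, hle, hF, hcard, hij⟩
    obtain ⟨e, he, heF⟩ : ∃ e ∈ p.edges, e ∉ F.edgeSet := by
      by_contra! h
      exact hij (p.transfer F h).reachable
    refine ⟨⟨e, List.mem_toFinset.mpr he⟩, Subtype.ext (Eq.symm ?_)⟩
    refine (hT.isAcyclic.anti (deleteEdges_le _)).eq_of_le_of_card_connectedComponent_le
      (fun x y hxy => deleteEdges_adj.mpr ⟨hle hxy, ?_⟩) ?_
    · rintro rfl
      exact heF hxy
    · rw [hcard, hT.connected.card_connectedComponent_deleteEdges_eq_two (hbridge he)]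
  rw [numSepForests, ← Nat.card_congr (Equiv.ofBijective cut ⟨hinj, hsurj⟩),
    Nat.card_eq_finsetCard, List.toFinset_card_of_nodup hp.isTrail.edges_nodup, Walk.length_edges,
    hlen]

theorem IsTree.effRes_eq_dist (hT : T.IsTree) (i j : V) : effRes T i j = T.dist i j := by
  rw [effRes, hT.numSpanningTrees_eq_one, hT.numSepForests_eq_dist, Nat.cast_one, div_one]

theorem IsTree.sum_degree_mul_dist_add_card_edgeFinset (hT : T.IsTree) (i : V) :
    ∑ j, T.degree j * T.dist i j + #T.edgeFinset = 2 * ∑ j, T.dist i j := by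
  set f := T.dist i
  let parents (j : V) := {u ∈ T.neighborFinset j | f u + 1 = f j}
  let children (j : V) := {u ∈ T.neighborFinset j | f j + 1 = f u}
  have hparents (j : V) : #(parents j) = if j = i then 0 else 1 := by
    split_ifs with hj
    · simp [parents, f, hj]
    · obtain ⟨u, hu, huniq⟩ := hT.existsUnique_adj_dist_add_one_eq hj
      refine card_eq_one.mpr ⟨u, ext fun w => ?_⟩
      simpa [parents] using ⟨huniq w, fun h => h ▸ hu⟩
  have hdegree (j : V) : T.degree j = #(parents j) + #(children j) := by
    rw [← card_neighborFinset_eq_degree,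
      ← card_filter_add_card_filter_not (s := T.neighborFinset j) (fun u => f u + 1 = f j)]
    congr 2
    refine filter_congr fun u hu => ?_
    have : f j = f u + 1 ∨ f u = f j + 1 :=
      hT.dist_eq_dist_add_one_of_adj i (mem_neighborFinset _ _ _ |>.mp hu)
    omega
  have hparents_mul : ∑ j, #(parents j) * f j = ∑ j, f j :=
    sum_congr rfl fun j _ => by by_cases hj : j = i <;> simp [hparents, hj, f]
  have hcard_parents : ∑ j, #(parents j) = #T.edgeFinset := by
    have := hT.card_edgeFinset
    simp only [hparents, sum_ite, sum_const_zero, filter_ne', sum_const, mem_univ,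
      card_erase_of_mem, card_univ, smul_eq_mul, mul_one, zero_add]
    omega
  have hchildren : ∑ j, #(children j) * f j = ∑ u, ∑ j ∈ parents u, f j := by
    simp_rw [← smul_eq_mul, ← sum_const]
    refine sum_comm' fun j u => ?_
    simp [parents, children, adj_comm]
  calc ∑ j, T.degree j * f j + #T.edgeFinset
      = ∑ j, #(parents j) * f j + (∑ u, ∑ j ∈ parents u, f j + ∑ u, #(parents u)) := by
        simp_rw [hdegree, add_mul, sum_add_distrib, hchildren, hcard_parents, add_assoc]
    _ = ∑ j, #(parents j) * f j + ∑ u, #(parents u) * f u := by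
        rw [← sum_add_distrib]
        refine congrArg _ (sum_congr rfl fun u _ => ?_)
        calc ∑ j ∈ parents u, f j + #(parents u) = ∑ j ∈ parents u, (f j + 1) := by
              rw [sum_add_distrib, card_eq_sum_ones]
          _ = ∑ j ∈ parents u, f u := sum_congr rfl fun j hj => (mem_filter.mp hj).2
          _ = #(parents u) * f u := by rw [sum_const, smul_eq_mul]
    _ = 2 * ∑ j, f j := by rw [hparents_mul, two_mul]

theorem IsTree.sum_degree_mul_dist (hT : T.IsTree) (i : V) :
    ∑ j, (T.degree j : ℝ) * T.dist i j = 2 * ∑ j, (T.dist i j : ℝ) - #T.edgeFinset := by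
  rw [eq_sub_iff_add_eq]
  exact_mod_cast hT.sum_degree_mul_dist_add_card_edgeFinset i

theorem IsTree.sum_sum_degree_mul_dist_mul_degree (hT : T.IsTree) :
    ∑ i, ∑ j, (T.degree i : ℝ) * T.dist i j * T.degree j =
      4 * ∑ i, ∑ j, (T.dist i j : ℝ) - 2 * #T.edgeFinset * (Fintype.card V + #T.edgeFinset) := by
  have hdegree : ∑ i, (T.degree i : ℝ) = 2 * #T.edgeFinset := by
    exact_mod_cast T.sum_degrees_eq_twice_card_edges
  have hcol : ∑ i, (T.degree i : ℝ) * ∑ j, (T.dist i j : ℝ) =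
      2 * ∑ i, ∑ j, (T.dist i j : ℝ) - Fintype.card V * #T.edgeFinset := by
    simp_rw [mul_sum]
    rw [sum_comm]
    simp_rw [dist_comm (u := _), hT.sum_degree_mul_dist, sum_sub_distrib, ← mul_sum, sum_const,
      card_univ, nsmul_eq_mul]
  calc ∑ i, ∑ j, (T.degree i : ℝ) * T.dist i j * T.degree j
      = ∑ i, (T.degree i : ℝ) * (2 * ∑ j, (T.dist i j : ℝ) - #T.edgeFinset) := by
        simp_rw [← hT.sum_degree_mul_dist, mul_sum]
        refine sum_congr rfl fun i _ => sum_congr rfl fun j _ => by ring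
    _ = 2 * ∑ i, (T.degree i : ℝ) * ∑ j, (T.dist i j : ℝ) -
          (∑ i, (T.degree i : ℝ)) * #T.edgeFinset := by
        rw [mul_sum, sum_mul, ← sum_sub_distrib]
        exact sum_congr rfl fun i _ => by ring
    _ = _ := by rw [hcol, hdegree]; ring

end Fintype

end SimpleGraph

/-- For a tree `T` on `n ≥ 2` vertices, Kemeny's constant equals
`2W(T)/(n−1) − n + 1/2` where `W` is the Wiener index. -/
theorem kemeny_tree_eq_wiener {V : Type*} [Fintype V] (T : SimpleGraph V)
    (hT : T.IsTree) (hn : 2 ≤ Fintype.card V) :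
    kemeny T = 2 * wiener T / ((Fintype.card V : ℝ) - 1) - (Fintype.card V : ℝ) + 1 / 2 := by
  have hm : (#T.edgeFinset : ℝ) = Fintype.card V - 1 := by
    rw [← hT.card_edgeFinset, Nat.cast_add, Nat.cast_one, add_sub_cancel_right]
  have hm0 : (Fintype.card V : ℝ) - 1 ≠ 0 := by
    rw [sub_ne_zero]; exact_mod_cast (by omega : Fintype.card V ≠ 1)
  simp only [kemeny, wiener, hT.effRes_eq_dist, hT.sum_sum_degree_mul_dist_mul_degree, hm]
  field_simp
  ring
end
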